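/- arXiv:2404.06358 — 9 statements merged into one kernel-verified Lean document; each statement's English description precedes it below -/
import Mathlib

section
/- The Frobenius number of the numerical semigroup S generated by a, a+1, a+2 (with a ≥ 3) is ⌊a/2⌋·a − 1; that is, ⌊a/2⌋·a − 1 is not representable as a nonnegative integer combination of a, a+1, a+2, but every larger integer is. -/
/-- The set of elements of the numerical semigroup `⟨a, a+1, a+2⟩`. -/
def InS (a r : ℕ) : Prop := ∃ x y z : ℕ, x * a + y * (a + 1) + z * (a + 2) = r

/-- The Frobenius number of `⟨a,a+1,a+2⟩` is `⌊a/2⌋·a − 1`. -/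
theorem stmt_0 (a : ℕ) (ha : 3 ≤ a) :
    ¬ InS a (a / 2 * a - 1) ∧ ∀ n : ℕ, a / 2 * a - 1 < n → InS a n := by
  set m := a / 2 with hm
  have hm1 : 1 ≤ m := by omega
  have hma : a ≤ m * a := Nat.le_mul_of_pos_left a hm1
  have h1 : 1 ≤ m * a := by omega
  have rep : ∀ k t : ℕ, t ≤ 2 * k → InS a (k * a + t) := by
    intro k t htk
    obtain ⟨u, v, huv, hle⟩ : ∃ u v, u + 2 * v = t ∧ v + u ≤ k :=
      ⟨t % 2, t / 2, by omega, by omega⟩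
    obtain ⟨x, hx⟩ := Nat.le.dest hle
    exact ⟨x, u, v, by rw [← huv, ← hx]; ring⟩
  constructor
  · rintro ⟨x, y, z, hxyz⟩
    have heq : (x + y + z) * a + (y + 2 * z) = m * a - 1 := by
      rw [← hxyz]; ring
    set k := x + y + z with hk
    set t := y + 2 * z with ht
    have htk : t ≤ 2 * k := by omega
    have heq' : k * a + t + 1 = m * a := by
      have := Nat.sub_add_cancel h1
      linarith [heq, this]
    rcases lt_or_ge k m with hkm | hkm
    · have hka : (k + 1) * a ≤ m * a := Nat.mul_le_mul_right a (by omega)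
      have hka' : k * a + a ≤ m * a := by nlinarith
      have h2m : 2 * m ≤ a := by omega
      linarith
    · have : m * a ≤ k * a := Nat.mul_le_mul_right a hkm
      linarith
  · intro n hn
    have hn' : m * a ≤ n := by
      have h := Nat.sub_add_cancel h1
      omega
    have hk : m ≤ n / a := (Nat.le_div_iff_mul_le (by omega : 0 < a)).2 hn'
    have ht : n % a < a := Nat.mod_lt _ (by omega)
    have h2m : a ≤ 2 * m + 1 := by omega
    have htk : n % a ≤ 2 * (n / a) := by omega
    have := rep (n / a) (n % a) htk
    rwa [Nat.mul_comm, Nat.div_add_mod] at this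
end

section
/- Let a ≥ 3, S = ⟨a, a+1, a+2⟩ and r ∈ S with ⌊a/2⌋·a − 1 < r < ⌊a/2⌋·(a+2). Then every factorization α of r satisfies |α| = ⌊r/a⌋ = ⌊a/2⌋. -/
theorem stmt_4 (a r : ℕ) (ha : 3 ≤ a) (hr1 : a / 2 * a - 1 < r)
    (hr2 : r < a / 2 * (a + 2))
    (α₁ α₂ α₃ : ℕ) (hfac : α₁ * a + α₂ * (a + 1) + α₃ * (a + 2) = r) :
    α₁ + α₂ + α₃ = r / a ∧ r / a = a / 2 := by
  set k := a / 2 with hk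
  have hk2 : 2 * k ≤ a ∧ a ≤ 2 * k + 1 := by omega
  have key : r = (α₁ + α₂ + α₃) * a + (α₂ + 2 * α₃) := by rw [← hfac]; ring
  set n := α₁ + α₂ + α₃ with hn
  set t := α₂ + 2 * α₃ with ht
  have htn : t ≤ 2 * n := by omega
  have hka : 1 ≤ k * a := by
    have : 1 ≤ k := by omega
    nlinarith
  have hrge : k * a ≤ r := by omega
  -- n ≤ k
  have h1 : n ≤ k := by
    by_contra h
    push_neg at h
    have : (k + 1) * a ≤ n * a := by
      apply Nat.mul_le_mul_right; omega
    nlinarith [hk2.1]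
  -- n ≥ k
  have h2 : k ≤ n := by
    by_contra h
    push_neg at h
    have hn1 : n + 1 ≤ k := h
    have : n * a + 2 * n < k * a := by nlinarith [hk2.1]
    omega
  have hnk : n = k := le_antisymm h1 h2
  rw [hnk] at key
  have htlt : t < a := by
    have : r < k * a + 2 * k := by nlinarith
    omega
  have hdiv : r / a = k := by
    rw [key, Nat.add_comm, Nat.add_mul_div_right _ _ (by omega : 0 < a),
      Nat.div_eq_of_lt htlt, Nat.zero_add]
  exact ⟨by omega, hdiv⟩
end

section
/- Let a ≥ 3 be odd, S = ⟨a, a+1, a+2⟩, and r ∈ S with ⌊a/2⌋·(a+2) < r < (⌊a/2⌋+2)·a. Then every factorization α of r satisfies |α| = ⌊r/a⌋ = ⌊a/2⌋ + 1. -/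
theorem stmt_8 (a r : ℕ) (ha : 3 ≤ a) (hodd : Odd a)
    (hr1 : a / 2 * (a + 2) < r) (hr2 : r < (a / 2 + 2) * a)
    (α₁ α₂ α₃ : ℕ) (hfac : α₁ * a + α₂ * (a + 1) + α₃ * (a + 2) = r) :
    α₁ + α₂ + α₃ = r / a ∧ r / a = a / 2 + 1 := by
  obtain ⟨k, hk⟩ := hodd
  have hdiv : a / 2 = k := by omega
  rw [hdiv] at hr1 hr2
  set n := α₁ + α₂ + α₃ with hn
  have h1 : n * a ≤ r := by rw [hn]; nlinarith
  have h2 : r ≤ n * (a + 2) := by rw [hn]; nlinarith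
  have hnk : n = k + 1 := by
    rcases Nat.lt_or_ge n (k + 1) with h' | h'
    · have h3 : n * (a + 2) ≤ k * (a + 2) := Nat.mul_le_mul_right _ (by omega)
      linarith
    · rcases Nat.eq_or_lt_of_le h' with h'' | h''
      · omega
      · have h3 : (k + 2) * a ≤ n * a := Nat.mul_le_mul_right _ (by omega)
        linarith
  have hdivr : r / a = k + 1 := by
    have hlo : (k + 1) * a ≤ r := by rw [← hnk]; exact h1
    exact Nat.div_eq_of_lt_le hlo (by linarith [hr2])
  refine ⟨by omega, by omega⟩
end

section
/- Define ℒ_a = ⌊a/2⌋(a+2) if a is even and ℒ_a = (⌊a/2⌋+2)·a if a is odd, where a ≥ 3. Then every r ∈ S = ⟨a, a+1, a+2⟩ with r < ℒ_a has all its factorizations of the same length ⌊r/a⌋, whereas ℒ_a ∈ S admits two factorizations of different lengths. -/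
/-- The bound `ℒ_a`. -/
def La (a : ℕ) : ℕ := if Even a then a / 2 * (a + 2) else (a / 2 + 2) * a

theorem stmt_9 (a : ℕ) (ha : 3 ≤ a) :
    (∀ r < La a, ∀ α₁ α₂ α₃ : ℕ,
      α₁ * a + α₂ * (a + 1) + α₃ * (a + 2) = r → α₁ + α₂ + α₃ = r / a) ∧
    (∃ α₁ α₂ α₃ β₁ β₂ β₃ : ℕ,
      α₁ * a + α₂ * (a + 1) + α₃ * (a + 2) = La a ∧
      β₁ * a + β₂ * (a + 1) + β₃ * (a + 2) = La a ∧
      α₁ + α₂ + α₃ ≠ β₁ + β₂ + β₃) := by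
  have ha0 : 0 < a := by omega
  constructor
  · intro r hr α₁ α₂ α₃ heq
    have hre : r = (α₂ + 2 * α₃) + a * (α₁ + α₂ + α₃) := by rw [← heq]; ring
    have he : α₂ + 2 * α₃ < a := by
      by_contra h
      push_neg at h
      unfold La at hr
      rcases Nat.even_or_odd a with ⟨k, hk⟩ | ⟨k, hk⟩
      · have hdiv : a / 2 = k := by omega
        rw [if_pos ⟨k, hk⟩, hdiv] at hr
        nlinarith [hre, hr, h, hk]
      · have hodd : ¬ Even a := by
          simp [Nat.even_iff, Nat.odd_iff.mp ⟨k, hk⟩]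
        have hdiv : a / 2 = k := by omega
        rw [if_neg hodd, hdiv] at hr
        have hL : k + 1 ≤ α₁ + α₂ + α₃ := by omega
        nlinarith [hre, hr, h, hk, hL]
    rw [hre, Nat.add_mul_div_left _ _ ha0, Nat.div_eq_of_lt he, Nat.zero_add]
  · unfold La
    rcases Nat.even_or_odd a with ⟨k, hk⟩ | ⟨k, hk⟩
    · have hdiv : a / 2 = k := by omega
      rw [if_pos ⟨k, hk⟩, hdiv]
      exact ⟨0, 0, k, k + 1, 0, 0, by nlinarith, by nlinarith, by omega⟩
    · have hodd : ¬ Even a := by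
        simp [Nat.even_iff, Nat.odd_iff.mp ⟨k, hk⟩]
      have hdiv : a / 2 = k := by omega
      rw [if_neg hodd, hdiv]
      exact ⟨0, 1, k, k + 2, 0, 0, by nlinarith, by nlinarith, by omega⟩
end

section
/- Let a ≥ 3, r ∈ ℕ, and set ℓ_r = ⌊r/a⌋ and ε_r = r − a·ℓ_r. Then r ∈ S = ⟨a, a+1, a+2⟩ if and only if ε_r ≤ 2·ℓ_r, and this holds if and only if there exist u, v ∈ ℕ with v ≤ 2u and r = a·u + v. -/
theorem stmt_12 (a r : ℕ) (ha : 3 ≤ a) :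
    ((∃ x y z : ℕ, x * a + y * (a + 1) + z * (a + 2) = r) ↔ r % a ≤ 2 * (r / a)) ∧
    (r % a ≤ 2 * (r / a) ↔ ∃ u v : ℕ, v ≤ 2 * u ∧ r = a * u + v) := by
  have ha0 : 0 < a := by omega
  have key : r % a ≤ 2 * (r / a) ↔ ∃ u v : ℕ, v ≤ 2 * u ∧ r = a * u + v := by
    constructor
    · intro h
      exact ⟨r / a, r % a, h, (Nat.div_add_mod r a).symm⟩
    · rintro ⟨u, v, hv, rfl⟩
      have h1 : (a * u + v) % a = v % a := by
        simp [Nat.add_mul_mod_self_left, Nat.mul_add_mod]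
      have h2 : (a * u + v) / a = u + v / a := by
        rw [add_comm, Nat.add_mul_div_left _ _ ha0, add_comm]
      calc (a * u + v) % a = v % a := h1
        _ ≤ v := Nat.mod_le v a
        _ ≤ 2 * u := hv
        _ ≤ 2 * (u + v / a) := Nat.mul_le_mul_left 2 (Nat.le_add_right u _)
        _ = 2 * ((a * u + v) / a) := by rw [h2]
  refine ⟨?_, key⟩
  constructor
  · rintro ⟨x, y, z, rfl⟩
    rw [key]
    exact ⟨x + y + z, y + 2 * z, by omega, by ring⟩
  · intro h
    set ℓ := r / a with hℓ
    set ε := r % a with hε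
    have hr : a * ℓ + ε = r := Nat.div_add_mod r a
    refine ⟨ℓ - (ε % 2 + ε / 2), ε % 2, ε / 2, ?_⟩
    have h2 : ε % 2 + ε / 2 ≤ ℓ := by omega
    have : ε % 2 + 2 * (ε / 2) = ε := by omega
    nlinarith [Nat.sub_add_cancel h2]
end

section
/- Let a ≥ 3, S = ⟨a, a+1, a+2⟩, ℒ_a as above, and r ∈ S with r < ℒ_a. Let ℓ_r = ⌊r/a⌋, ε_r = r mod a, and φ_r = (ℓ_r − ⌊(ε_r+1)/2⌋, ε_r − 2⌊ε_r/2⌋, ⌊ε_r/2⌋). Then the set of factorizations of r equals { φ_r + j·(−1,2,−1) : 0 ≤ j ≤ min(φ_{r,1}, φ_{r,3}) }. -/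
lemma key_nm (a r n m : ℕ) (ha : 3 ≤ a) (h : n * a + m = r) (hm : m ≤ 2 * n)
    (hr : r < La a) : n = r / a ∧ m = r % a := by
  have hd : a * (r / a) + r % a = r := Nat.div_add_mod r a
  have hε : r % a < a := Nat.mod_lt _ (by omega)
  generalize hE : r % a = E at hd hε ⊢
  generalize hL : r / a = L at hd ⊢
  have hnle : n ≤ L := by
    by_contra hc
    push_neg at hc
    have h1 : (L + 1) * a ≤ n * a := Nat.mul_le_mul_right a hc
    nlinarith
  rcases Nat.lt_or_ge n L with hlt | hge
  · exfalso
    obtain ⟨k, hk⟩ : ∃ k, L = n + k + 1 := ⟨L - n - 1, by omega⟩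
    subst hk
    have e1 : a * (n + k + 1) = n * a + a * (k + 1) := by ring
    have hma : m = a * (k + 1) + E := by linarith
    have hag : a ≤ a * (k + 1) := Nat.le_mul_of_pos_right a (by omega)
    have hbig : a + E + 2 ≤ 2 * (n + k + 1) := by omega
    rcases Nat.even_or_odd a with ⟨t, ht⟩ | ⟨t, ht⟩
    · have ht2 : a = 2 * t := by omega
      subst ht2
      have hLa : La (2 * t) = t * (2 * t + 2) := by
        simp [La, Nat.mul_div_cancel_left]
      rw [hLa] at hr
      have hℓ' : t + 1 ≤ n + k + 1 := by omega
      have hmul : 2 * t * (t + 1) ≤ 2 * t * (n + k + 1) :=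
        Nat.mul_le_mul_left (2 * t) hℓ'
      nlinarith
    · have ht2 : a = 2 * t + 1 := by omega
      subst ht2
      have hLa : La (2 * t + 1) = (t + 2) * (2 * t + 1) := by
        have hodd : ¬ Even (2 * t + 1) := by simp [Nat.even_iff]
        simp [La, hodd]
        omega
      rw [hLa] at hr
      have hℓ' : t + 2 ≤ n + k + 1 := by omega
      have hmul : (2 * t + 1) * (t + 2) ≤ (2 * t + 1) * (n + k + 1) :=
        Nat.mul_le_mul_left (2 * t + 1) hℓ'
      nlinarith
  · have hn : n = L := le_antisymm hnle hge
    subst hn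
    have : n * a = a * n := Nat.mul_comm _ _
    exact ⟨rfl, by linarith⟩

theorem stmt_14 (a r : ℕ) (ha : 3 ≤ a)
    (hrS : ∃ x y z : ℕ, x * a + y * (a + 1) + z * (a + 2) = r)
    (hr : r < La a) :
    {α : ℕ × ℕ × ℕ | α.1 * a + α.2.1 * (a + 1) + α.2.2 * (a + 2) = r} =
      {α : ℕ × ℕ × ℕ | ∃ j : ℕ,
        j ≤ min (r / a - (r % a + 1) / 2) (r % a / 2) ∧
        α = (r / a - (r % a + 1) / 2 - j, r % a - 2 * (r % a / 2) + 2 * j,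
          r % a / 2 - j)} := by
  obtain ⟨u, v, w, huvw⟩ := hrS
  have hkey := key_nm a r (u + v + w) (v + 2 * w) ha (by rw [← huvw]; ring)
    (by omega) hr
  have hd : a * (r / a) + r % a = r := Nat.div_add_mod r a
  ext α
  obtain ⟨x, y, z⟩ := α
  simp only [Set.mem_setOf_eq, Prod.mk.injEq]
  constructor
  · intro h
    have hk2 := key_nm a r (x + y + z) (y + 2 * z) ha (by rw [← h]; ring)
      (by omega) hr
    refine ⟨r % a / 2 - z, ?_, ?_, ?_, ?_⟩ <;>
    · generalize r / a = L at *
      generalize r % a = E at *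
      omega
  · rintro ⟨j, hj, hx, hy, hz⟩
    have hs : x + y + z = r / a ∧ y + 2 * z = r % a := by
      generalize r / a = L at *
      generalize r % a = E at *
      omega
    calc x * a + y * (a + 1) + z * (a + 2)
        = (x + y + z) * a + (y + 2 * z) := by ring
      _ = (r / a) * a + r % a := by rw [hs.1, hs.2]
      _ = r := by rw [Nat.mul_comm]; exact hd
end

section
/- Let a ≥ 3, S = ⟨a, a+1, a+2⟩, ℒ_a as above, and r ∈ S with r < ℒ_a. Let δ_r be the number of factorizations of r (the denumerant), ℓ_r = ⌊r/a⌋, and ι_r = φ_{r,2} + |φ_{r,1} − φ_{r,3}| where φ_r is the seed factorization. Then ℓ_r = 2(δ_r − 1) + ι_r; in particular ℓ_r and ι_r have the same parity and 0 ≤ ι_r ≤ ℓ_r. -/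
private lemma eq_of_sol (a n m ℓ ε : ℕ) (hε : ε < a) (hm : m ≤ 2 * n)
    (hℓ : 2 * ℓ ≤ a + 1) (key : n * a + m = ℓ * a + ε) : n = ℓ ∧ m = ε := by
  rcases lt_trichotomy n ℓ with h | h | h
  · exfalso
    have h1 : (n + 1) * a ≤ ℓ * a := Nat.mul_le_mul_right a h
    have h2 : (n + 1) * a = n * a + a := by ring
    linarith
  · subst h
    exact ⟨rfl, Nat.add_left_cancel key⟩
  · exfalso
    have h1 : (ℓ + 1) * a ≤ n * a := Nat.mul_le_mul_right a h
    have h2 : (ℓ + 1) * a = ℓ * a + a := by ring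
    linarith

theorem stmt_15 (a r : ℕ) (ha : 3 ≤ a)
    (hrS : ∃ x y z : ℕ, x * a + y * (a + 1) + z * (a + 2) = r)
    (hr : r < La a)
    (δ : ℕ)
    (hδ : δ = Nat.card {α : ℕ × ℕ × ℕ //
      α.1 * a + α.2.1 * (a + 1) + α.2.2 * (a + 2) = r})
    (ι : ℕ)
    (hι : ι = (r % a - 2 * (r % a / 2)) +
      (max (r / a - (r % a + 1) / 2) (r % a / 2) -
        min (r / a - (r % a + 1) / 2) (r % a / 2))) :
    r / a = 2 * (δ - 1) + ι ∧ r / a % 2 = ι % 2 ∧ ι ≤ r / a := by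
  have ha0 : 0 < a := by omega
  have hεa : r % a < a := Nat.mod_lt r ha0
  have hrm : r / a * a + r % a = r := by
    have h := Nat.div_add_mod r a
    rw [Nat.mul_comm a (r / a)] at h
    exact h
  have hLa : La a ≤ ((a + 1) / 2 + 1) * a := by
    unfold La
    split
    · next h =>
        obtain ⟨k, rfl⟩ := h
        have h1 : (k + k) / 2 = k := by omega
        have h2 : (k + k + 1) / 2 = k := by omega
        rw [h1, h2]
        ring_nf
        nlinarith
    · next h =>
        have h1 : (a + 1) / 2 + 1 = a / 2 + 2 := by
          rcases Nat.even_or_odd a with he | ho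
          · exact absurd he h
          · obtain ⟨k, rfl⟩ := ho; omega
        rw [h1]
  have hl2 : 2 * (r / a) ≤ a + 1 := by
    have hr' : r < ((a + 1) / 2 + 1) * a := lt_of_lt_of_le hr hLa
    have := (Nat.div_lt_iff_lt_mul ha0).mpr hr'
    omega
  have hchar : ∀ x y z : ℕ, x * a + y * (a + 1) + z * (a + 2) = r →
      x + y + z = r / a ∧ y + 2 * z = r % a := by
    intro x y z hxyz
    have e1 : (x + y + z) * a + (y + 2 * z) = x * a + y * (a + 1) + z * (a + 2) := by ring
    rw [hxyz, ← hrm] at e1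
    exact eq_of_sol a _ _ _ _ hεa (by omega) hl2 e1
  have hfull : ∀ x y z : ℕ, x * a + y * (a + 1) + z * (a + 2) = r ↔
      (r % a - r / a ≤ z ∧ z ≤ r % a / 2 ∧ y = r % a - 2 * z ∧ x = r / a + z - r % a) := by
    intro x y z
    constructor
    · intro hxyz
      have := hchar x y z hxyz
      omega
    · rintro ⟨h1, h2, rfl, rfl⟩
      have e1 : (r / a + z - r % a) + (r % a - 2 * z) + z = r / a := by omega
      have e2 : (r % a - 2 * z) + 2 * z = r % a := by omega
      have e3 : (r / a + z - r % a) * a + (r % a - 2 * z) * (a + 1) + z * (a + 2)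
          = ((r / a + z - r % a) + (r % a - 2 * z) + z) * a + ((r % a - 2 * z) + 2 * z) := by
        ring
      rw [e3, e1, e2, hrm]
  have hle : r % a ≤ 2 * (r / a) := by
    obtain ⟨x, y, z, hxyz⟩ := hrS
    have := hchar x y z hxyz
    omega
  have hcard : δ = r % a / 2 + 1 - (r % a - r / a) := by
    rw [hδ]
    have e : {α : ℕ × ℕ × ℕ //
        α.1 * a + α.2.1 * (a + 1) + α.2.2 * (a + 2) = r} ≃
        (Finset.Icc (r % a - r / a) (r % a / 2) : Finset ℕ) :=
      { toFun := fun α => ⟨α.1.2.2, by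
          have := (hfull α.1.1 α.1.2.1 α.1.2.2).mp α.2
          simp only [Finset.mem_Icc]
          omega⟩
        invFun := fun z => ⟨(r / a + z.1 - r % a, r % a - 2 * z.1, z.1), by
          have hz := z.2
          simp only [Finset.mem_Icc] at hz
          exact (hfull _ _ _).mpr ⟨hz.1, hz.2, rfl, rfl⟩⟩
        left_inv := fun α => by
          obtain ⟨⟨x, y, z⟩, hα⟩ := α
          obtain ⟨h1, h2, h3, h4⟩ := (hfull x y z).mp hα
          apply Subtype.ext
          simp only
          rw [h3, h4]
        right_inv := fun z => Subtype.ext rfl }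
    rw [Nat.card_congr e, Nat.card_eq_finsetCard, Nat.card_Icc]
  refine ⟨?_, ?_, ?_⟩ <;> omega
end

section
/- Let a ≥ 3, S = ⟨a, a+1, a+2⟩, and L = ⌊(a−1)/2⌋. Then S ∩ [0, (a+2)L] is the disjoint union of the sets S^0, S^1, …, S^L, where S^ℓ is the set of elements of S all of whose factorizations have length ℓ. -/
/-- `Sell a ℓ` is the set of elements of `⟨a,a+1,a+2⟩` all of whose
factorizations have length `ℓ`. -/
def Sell (a ℓ : ℕ) : Set ℕ :=
  {r : ℕ | (∃ x y z : ℕ, x * a + y * (a + 1) + z * (a + 2) = r) ∧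
    ∀ α₁ α₂ α₃ : ℕ, α₁ * a + α₂ * (a + 1) + α₃ * (a + 2) = r →
      α₁ + α₂ + α₃ = ℓ}

lemma fact_decomp (a x y z : ℕ) :
    x * a + y * (a + 1) + z * (a + 2) = (x + y + z) * a + (y + 2 * z) := by ring

lemma len_le_L (a L ℓ r : ℕ) (hLa : 2 * L < a) (hr : r ≤ (a + 2) * L)
    (h : ℓ * a ≤ r) : ℓ ≤ L := by
  by_contra hc
  push_neg at hc
  have : (L + 1) * a ≤ ℓ * a := Nat.mul_le_mul_right a hc
  nlinarith

lemma len_unique (a L : ℕ) (hLa : 2 * L < a) (r : ℕ) (hr : r ≤ (a + 2) * L)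
    (ℓ₁ ℓ₂ : ℕ) (h1 : ℓ₁ * a ≤ r) (h1' : r ≤ ℓ₁ * a + 2 * ℓ₁)
    (h2 : ℓ₂ * a ≤ r) (h2' : r ≤ ℓ₂ * a + 2 * ℓ₂) : ℓ₁ = ℓ₂ := by
  have hL1 := len_le_L a L ℓ₁ r hLa hr h1
  have hL2 := len_le_L a L ℓ₂ r hLa hr h2
  rcases lt_trichotomy ℓ₁ ℓ₂ with h | h | h
  · exfalso
    have : (ℓ₁ + 1) * a ≤ ℓ₂ * a := Nat.mul_le_mul_right a h
    nlinarith
  · exact h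
  · exfalso
    have : (ℓ₂ + 1) * a ≤ ℓ₁ * a := Nat.mul_le_mul_right a h
    nlinarith

theorem stmt_17 (a L : ℕ) (ha : 3 ≤ a) (hL : L = (a - 1) / 2) :
    ({r : ℕ | (∃ x y z : ℕ, x * a + y * (a + 1) + z * (a + 2) = r) ∧
        r ≤ (a + 2) * L} = ⋃ ℓ ∈ Finset.range (L + 1), Sell a ℓ) ∧
    (∀ ℓ ℓ' : ℕ, ℓ ≠ ℓ' → Sell a ℓ ∩ Sell a ℓ' = ∅) := by
  have hLa : 2 * L < a := by omega
  constructor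
  · ext r
    simp only [Set.mem_setOf_eq, Set.mem_iUnion, Finset.mem_range, Sell]
    constructor
    · rintro ⟨⟨x, y, z, hxyz⟩, hr⟩
      refine ⟨x + y + z, ?_, ⟨⟨x, y, z, hxyz⟩, ?_⟩⟩
      · have := fact_decomp a x y z
        have h1 : (x + y + z) * a ≤ r := by omega
        have := len_le_L a L (x + y + z) r hLa hr h1
        omega
      · intro α₁ α₂ α₃ hα
        have hd1 := fact_decomp a x y z
        have hd2 := fact_decomp a α₁ α₂ α₃
        exact (len_unique a L hLa r hr (α₁ + α₂ + α₃) (x + y + z)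
          (by omega) (by omega) (by omega) (by omega))
    · rintro ⟨ℓ, hℓ, ⟨⟨x, y, z, hxyz⟩, hall⟩⟩
      refine ⟨⟨x, y, z, hxyz⟩, ?_⟩
      have hs := hall x y z hxyz
      have hd := fact_decomp a x y z
      rw [hs] at hd
      have : r ≤ ℓ * a + 2 * ℓ := by omega
      have : ℓ * a + 2 * ℓ ≤ L * a + 2 * L := by
        have : ℓ ≤ L := by omega
        have := Nat.mul_le_mul_right a this
        omega
      nlinarith
  · intro ℓ ℓ' hne
    rw [Set.eq_empty_iff_forall_notMem]
    rintro r ⟨h1, h2⟩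
    obtain ⟨⟨x, y, z, hxyz⟩, hall⟩ := h1
    obtain ⟨-, hall'⟩ := h2
    exact hne ((hall x y z hxyz) ▸ (hall' x y z hxyz))
end

section
/- Let a ≥ 3 be even and S = ⟨a, a+1, a+2⟩. Then every r ∈ S can be written as r = λ·a + μ·(a+1) + η·(a+2) with λ ∈ ℕ, μ ∈ {0,1}, and η ∈ {0, 1, …, a/2 − 1}. -/
theorem stmt_18 (a r : ℕ) (ha : 3 ≤ a) (heven : Even a)
    (hrS : ∃ x y z : ℕ, x * a + y * (a + 1) + z * (a + 2) = r) :
    ∃ lam mu eta : ℕ, mu ≤ 1 ∧ eta < a / 2 ∧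
      r = lam * a + mu * (a + 1) + eta * (a + 2) := by
  obtain ⟨x, y, z, hxyz⟩ := hrS
  obtain ⟨b, hb⟩ := heven
  have hb2 : a = 2 * b := by omega
  set m := y + 2 * z with hmdef
  obtain ⟨k, s, hks, hsa⟩ : ∃ k s, m = 2 * (b * k) + s ∧ s < a :=
    ⟨m / a, m % a, by
      have := Nat.div_add_mod m a
      have : a * (m / a) = 2 * (b * (m / a)) := by rw [hb2]; ring
      omega,
     Nat.mod_lt _ (by omega)⟩
  set mu := s % 2 with hmu
  set eta := s / 2 with heta
  have hds : 2 * eta + mu = s := Nat.div_add_mod s 2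
  have key : mu + eta ≤ y + z := by omega
  refine ⟨x + y + z + k - (mu + eta), mu, eta, by omega, by omega, ?_⟩
  set lam := x + y + z + k - (mu + eta) with hlam
  have hl : lam + mu + eta = x + y + z + k := by omega
  have hr : r = (x + y + z) * a + m := by rw [← hxyz, hmdef]; ring
  have e0 : lam * a + mu * (a + 1) + eta * (a + 2)
      = (lam + mu + eta) * a + (2 * eta + mu) := by ring
  rw [e0, hl]
  have e1 : (x + y + z + k) * a = (x + y + z) * a + 2 * (b * k) := by
    rw [hb2]; ring
  set A := (x + y + z) * a
  set B := b * k
  omega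
end
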